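/- The binary entropy function h₂(p) = −p·log₂ p − (1−p)·log₂(1−p) (with h₂(0)=h₂(1)=0) satisfies h₂(p) ≤ 2√(p(1−p)) for all p ∈ [0,1], i.e., the binary entropy is upper-bounded by the Bhattacharyya parameter of the BSC. -/

import Mathlib

/-!
Write `a = √p`, `b = √(1 - p)`, so that `a² + b² = 1` and `√(p(1-p)) = ab`; in nats the claim
is `H(p) ≤ 2 log 2 · ab`. Away from `p = 1/2` the bound `-x log x ≤ (1 - x)√x` (which is
`sinh s ≤ s` for `s = log √x ≤ 0`) gives `H(p) ≤ ab(a + b)`, enough when `a + b ≤ 2 log 2`.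
Near `p = 1/2` the binary Pinsker inequality `H(p) ≤ log 2 - 2(p - 1/2)² = log 2 - (1 - 4a²b²)/2`
takes over; it suffices there because `(a + b)² > 4 log² 2 ≥ 2 log 2`.
-/

/-- The binary entropy function (in bits); since `Real.logb 2 0 = 0`, this
agrees with the convention `h₂(0) = h₂(1) = 0`. -/
noncomputable def binEnt (p : ℝ) : ℝ :=
  -p * Real.logb 2 p - (1 - p) * Real.logb 2 (1 - p)

open Real Set

lemma binEnt_eq_binEntropy_div_log_two (p : ℝ) : binEnt p = binEntropy p / log 2 := by
  simp only [binEnt, binEntropy, logb, log_inv]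
  ring

lemma negMulLog_le_one_sub_mul_sqrt {x : ℝ} (hx0 : 0 ≤ x) (hx1 : x ≤ 1) :
    negMulLog x ≤ (1 - x) * √x := by
  rcases hx0.eq_or_lt with rfl | hx0
  · simp
  have hu : 0 < √x := sqrt_pos.2 hx0
  have hsinh : (√x - (√x)⁻¹) / 2 ≤ log x / 2 := by
    rw [← sinh_log hu, ← log_sqrt hx0.le]
    exact sinh_le_self_iff.2 (log_nonpos (sqrt_nonneg x) (sqrt_le_one.2 hx1))
  calc negMulLog x = x * -log x := by rw [negMulLog]; ring
    _ ≤ x * ((√x)⁻¹ - √x) := by gcongr; linarith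
    _ = (1 - x) * √x := by rw [mul_sub, ← div_eq_mul_inv, div_sqrt]; ring

lemma binEntropy_le_sqrt_mul_sqrt_mul_add {p : ℝ} (hp : p ∈ Icc (0 : ℝ) 1) :
    binEntropy p ≤ √p * √(1 - p) * (√p + √(1 - p)) := by
  obtain ⟨hp0, hp1⟩ := hp
  have hq := negMulLog_le_one_sub_mul_sqrt (x := 1 - p) (by linarith) (by linarith)
  rw [sub_sub_cancel] at hq
  calc binEntropy p ≤ (1 - p) * √p + p * √(1 - p) := by
        rw [binEntropy_eq_negMulLog_add_negMulLog_one_sub]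
        exact add_le_add (negMulLog_le_one_sub_mul_sqrt hp0 hp1) hq
    _ = √p * √(1 - p) * (√p + √(1 - p)) := by
        linear_combination (-√p) * mul_self_sqrt (sub_nonneg.2 hp1) - √(1 - p) * mul_self_sqrt hp0

lemma two_mul_le_log_one_add_sub_log_one_sub {t : ℝ} (ht0 : 0 ≤ t) (ht1 : t < 1) :
    2 * t ≤ log (1 + t) - log (1 - t) := by
  have hsum := hasSum_log_sub_log_of_abs_lt_one (abs_lt.2 ⟨by linarith, ht1⟩)
  simpa using le_hasSum hsum 0 fun k _ ↦ by positivity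

lemma antitoneOn_binEntropy_add_two_mul_sq :
    AntitoneOn (fun p ↦ binEntropy p + 2 * (p - 2⁻¹) ^ 2) (Icc 2⁻¹ 1) := by
  refine antitoneOn_of_hasDerivWithinAt_nonpos (convex_Icc _ _) (by fun_prop)
    (f' := fun p ↦ log (1 - p) - log p + 4 * (p - 2⁻¹)) (fun p hp ↦ ?_) (fun p hp ↦ ?_)
  all_goals rw [interior_Icc] at hp; obtain ⟨hp0, hp1⟩ := hp
  · have hsq : HasDerivAt (fun p ↦ 2 * (p - 2⁻¹) ^ 2) (4 * (p - 2⁻¹)) p :=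
      (((hasDerivAt_id p).sub_const 2⁻¹).pow 2 |>.const_mul 2).congr_deriv <| by
        simp only [Nat.cast_ofNat, id_eq, Nat.add_one_sub_one, pow_one, mul_one]
        ring
    exact ((hasDerivAt_binEntropy (by linarith) hp1.ne).add hsq).hasDerivWithinAt
  · have key := two_mul_le_log_one_add_sub_log_one_sub (t := 2 * p - 1) (by linarith) (by linarith)
    rw [show 1 + (2 * p - 1) = 2 * p by ring, show 1 - (2 * p - 1) = 2 * (1 - p) by ring,
      log_mul two_ne_zero (by linarith), log_mul two_ne_zero (by linarith)] at key
    linarith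

lemma binEntropy_le_log_two_sub_two_mul_sq {p : ℝ} (hp : p ∈ Icc (0 : ℝ) 1) :
    binEntropy p ≤ log 2 - 2 * (p - 2⁻¹) ^ 2 := by
  wlog hhalf : 2⁻¹ ≤ p generalizing p
  · have h := this (p := 1 - p) ⟨by linarith [hp.2], by linarith [hp.1]⟩ (by linarith)
    rw [binEntropy_one_sub] at h
    linarith
  have h := antitoneOn_binEntropy_add_two_mul_sq ⟨le_rfl, by norm_num⟩ ⟨hhalf, hp.2⟩ hhalf
  simp only [binEntropy_two_inv, sub_self] at h
  linarith

/-- The binary entropy is bounded above by the BSC Bhattacharyya parameter: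
`h₂(p) ≤ 2√(p(1−p))` for `p ∈ [0,1]`. -/
theorem binEnt_le_bhattacharyya (p : ℝ) (hp : p ∈ Set.Icc (0:ℝ) 1) :
    binEnt p ≤ 2 * Real.sqrt (p * (1 - p)) := by
  rw [binEnt_eq_binEntropy_div_log_two, div_le_iff₀ (log_pos one_lt_two),
    sqrt_mul hp.1]
  set a := √p
  set b := √(1 - p)
  have ha : a * a = p := mul_self_sqrt hp.1
  have hb : b * b = 1 - p := mul_self_sqrt (sub_nonneg.2 hp.2)
  have hab : 0 ≤ a * b := mul_nonneg (sqrt_nonneg _) (sqrt_nonneg _)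
  rcases le_or_gt (a + b) (2 * log 2) with hsmall | hlarge
  · calc binEntropy p ≤ a * b * (a + b) := binEntropy_le_sqrt_mul_sqrt_mul_add hp
      _ ≤ a * b * (2 * log 2) := by gcongr
      _ = 2 * (a * b) * log 2 := by ring
  · have hlog : 1 / 2 < log 2 := by linarith [log_two_gt_d9]
    have hsum_sq : 2 * log 2 ≤ 1 + 2 * (a * b) := by nlinarith
    calc binEntropy p ≤ log 2 - 2 * (p - 2⁻¹) ^ 2 := binEntropy_le_log_two_sub_two_mul_sq hp
      _ = 2 * (a * b) * log 2 + (a - b) ^ 2 * (log 2 - (1 + 2 * (a * b)) / 2) := by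
        linear_combination (1 / 2 + a * b - 2 * (a * a) - log 2) * (ha + hb)
          + 2 * (p + a * a - 1) * ha
      _ ≤ 2 * (a * b) * log 2 :=
        add_le_of_nonpos_right (mul_nonpos_of_nonneg_of_nonpos (sq_nonneg _) (by linarith))
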